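/- Let Ω₁ ⊆ Ω₂ be two bounded convex subsets of ℝ^N with nonempty interior. Then the (N−1)-dimensional Hausdorff measures of their topological boundaries satisfy ℋ^{N−1}(∂Ω₁) ≤ ℋ^{N−1}(∂Ω₂). -/
import Mathlib


open MeasureTheory Metric Filter Topology
open scoped RealInnerProductSpace

noncomputable section

/-- Core variational inequality estimate: nearest-point projections onto a convex set
are 1-Lipschitz (stated via the variational characterization). -/
lemma proj_var_dist {E : Type*} [NormedAddCommGroup E] [InnerProductSpace ℝ E]
    {K : Set E} {u₁ u₂ v₁ v₂ : E} (hv₁ : v₁ ∈ K) (hv₂ : v₂ ∈ K)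
    (h₁ : ∀ w ∈ K, ⟪u₁ - v₁, w - v₁⟫ ≤ 0)
    (h₂ : ∀ w ∈ K, ⟪u₂ - v₂, w - v₂⟫ ≤ 0) :
    ‖v₁ - v₂‖ ≤ ‖u₁ - u₂‖ := by
  have a := h₁ v₂ hv₂
  have b := h₂ v₁ hv₁
  have expand : ⟪u₁ - u₂, v₁ - v₂⟫
      = ⟪v₁ - v₂, v₁ - v₂⟫ + ⟪u₁ - v₁, v₁ - v₂⟫ - ⟪u₂ - v₂, v₁ - v₂⟫ := by
    rw [show u₁ - u₂ = (v₁ - v₂) + (u₁ - v₁) - (u₂ - v₂) by abel, inner_sub_left,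
      inner_add_left]
  have a' : (0:ℝ) ≤ ⟪u₁ - v₁, v₁ - v₂⟫ := by
    have : ⟪u₁ - v₁, v₁ - v₂⟫ = -⟪u₁ - v₁, v₂ - v₁⟫ := by
      rw [← inner_neg_right, neg_sub]
    rw [this]; linarith
  have key : ‖v₁ - v₂‖ ^ 2 ≤ ⟪u₁ - u₂, v₁ - v₂⟫ := by
    rw [← real_inner_self_eq_norm_sq]
    linarith
  have hle : ⟪u₁ - u₂, v₁ - v₂⟫ ≤ ‖u₁ - u₂‖ * ‖v₁ - v₂‖ := real_inner_le_norm _ _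
  rcases eq_or_lt_of_le (norm_nonneg (v₁ - v₂)) with h0 | h0
  · rw [← h0]; exact norm_nonneg _
  · nlinarith

/-- Monotonicity of the `(N-1)`-dimensional Hausdorff measure of the boundary of
nested bounded convex bodies. -/
theorem hausdorff_boundary_mono_of_convex {N : ℕ}
    (Ω₁ Ω₂ : Set (EuclideanSpace ℝ (Fin N)))
    (h₁b : Bornology.IsBounded Ω₁) (h₂b : Bornology.IsBounded Ω₂)
    (h₁c : Convex ℝ Ω₁) (h₂c : Convex ℝ Ω₂)
    (h₁i : (interior Ω₁).Nonempty) (h₂i : (interior Ω₂).Nonempty)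
    (hsub : Ω₁ ⊆ Ω₂) :
    μH[(N : ℝ) - 1] (frontier Ω₁) ≤ μH[(N : ℝ) - 1] (frontier Ω₂) := by
  rcases Nat.eq_zero_or_pos N with hN | hN
  · -- trivial case `N = 0`: the space is a single point, boundaries are empty
    subst hN
    haveI : Subsingleton (EuclideanSpace ℝ (Fin 0)) := by
      constructor
      intro a b
      ext i
      exact absurd i.2 (by omega)
    have h1 : Ω₁ = Set.univ := (h₁i.mono interior_subset).eq_univ
    rw [h1, frontier_univ]
    simp
  -- now `N ≥ 1`, so the dimension is nonnegative
  have hd : (0:ℝ) ≤ (N : ℝ) - 1 := by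
    have : (1:ℝ) ≤ (N:ℝ) := by exact_mod_cast hN
    linarith
  set K : Set (EuclideanSpace ℝ (Fin N)) := closure Ω₁ with hK
  have Kne : K.Nonempty := (h₁i.mono interior_subset).closure
  have Kcl : IsClosed K := isClosed_closure
  have Kconv : Convex ℝ K := h₁c.closure
  -- the nearest point projection onto K
  have hex : ∀ u : EuclideanSpace ℝ (Fin N), ∃ v ∈ K, ‖u - v‖ = ⨅ w : K, ‖u - w‖ :=
    exists_norm_eq_iInf_of_complete_convex Kne Kcl.isComplete Kconv
  set proj : EuclideanSpace ℝ (Fin N) → EuclideanSpace ℝ (Fin N) := fun u => Classical.choose (hex u) with hprojdef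
  have hproj_mem : ∀ u, proj u ∈ K := fun u => (Classical.choose_spec (hex u)).1
  have hproj_ineq : ∀ u, ∀ w ∈ K, ⟪u - proj u, w - proj u⟫ ≤ 0 := fun u =>
    (norm_eq_iInf_iff_real_inner_le_zero Kconv (hproj_mem u)).mp
      (Classical.choose_spec (hex u)).2
  have lip : LipschitzWith 1 proj := by
    apply LipschitzWith.of_dist_le_mul
    intro u₁ u₂
    rw [NNReal.coe_one, one_mul, dist_eq_norm, dist_eq_norm]
    exact proj_var_dist (hproj_mem u₁) (hproj_mem u₂) (hproj_ineq u₁) (hproj_ineq u₂)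
  -- every boundary point of Ω₁ is the projection of a boundary point of Ω₂
  have surj : frontier Ω₁ ⊆ proj '' (frontier Ω₂) := by
    intro x hx
    have hxK : x ∈ K := hx.1
    have hxint : x ∉ interior Ω₁ := hx.2
    obtain ⟨y₀, hy₀⟩ := h₁i
    obtain ⟨f, hf⟩ := geometric_hahn_banach_open_point h₁c.interior isOpen_interior hxint
    -- f ≤ f x on all of K
    have hfK : ∀ w ∈ K, f w ≤ f x := by
      intro w hw
      have cont : Continuous fun t : ℝ => f (w + t • (y₀ - w)) := by fun_prop
      have tend : Tendsto (fun t : ℝ => f (w + t • (y₀ - w))) (𝓝[>] 0) (𝓝 (f w)) := by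
        have := (cont.tendsto 0).mono_left (nhdsWithin_le_nhds (s := Set.Ioi (0:ℝ)))
        simpa using this
      refine le_of_tendsto tend ?_
      filter_upwards [Ioc_mem_nhdsGT_of_mem (Set.left_mem_Ico.2 one_pos)] with t ht
      exact (hf _ (h₁c.add_smul_sub_mem_interior' hw hy₀ ht)).le
    -- the outward normal direction
    set n := (InnerProductSpace.toDual ℝ (EuclideanSpace ℝ (Fin N))).symm f with hn
    have hinner : ∀ v : EuclideanSpace ℝ (Fin N), ⟪n, v⟫ = f v := fun v =>
      InnerProductSpace.toDual_symm_apply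
    have hne : n ≠ 0 := by
      intro h0
      have h1 := hf y₀ hy₀
      rw [← hinner y₀, ← hinner x, h0] at h1
      simp at h1
    -- the outward ray from x
    set S : Set ℝ := {t : ℝ | 0 ≤ t ∧ x + t • n ∈ closure Ω₂} with hS
    have h0S : (0:ℝ) ∈ S := ⟨le_rfl, by simpa using closure_mono hsub hxK⟩
    obtain ⟨R, hR⟩ := (Metric.isBounded_iff_subset_closedBall 0).mp h₂b.closure
    have bdd : BddAbove S := by
      refine ⟨(R + ‖x‖) / ‖n‖, fun t ht => ?_⟩
      have h1 : ‖x + t • n‖ ≤ R := by simpa using hR ht.2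
      have h2 : t * ‖n‖ = ‖t • n‖ := by
        rw [norm_smul, Real.norm_eq_abs, abs_of_nonneg ht.1]
      have h3 : ‖t • n‖ ≤ ‖x + t • n‖ + ‖x‖ := by
        calc ‖t • n‖ = ‖(x + t • n) - x‖ := by rw [add_sub_cancel_left]
        _ ≤ ‖x + t • n‖ + ‖x‖ := norm_sub_le _ _
      rw [le_div_iff₀ (norm_pos_iff.mpr hne)]
      linarith
    have Sclosed : IsClosed S := by
      have : S = Set.Ici (0:ℝ) ∩ (fun t : ℝ => x + t • n) ⁻¹' closure Ω₂ := rfl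
      rw [this]
      exact isClosed_Ici.inter (isClosed_closure.preimage (by fun_prop))
    set t₀ : ℝ := sSup S with ht₀
    have ht₀S : t₀ ∈ S := Sclosed.csSup_mem ⟨0, h0S⟩ bdd
    set z := x + t₀ • n with hz
    have hz2 : z ∈ closure Ω₂ := ht₀S.2
    have hznotint : z ∉ interior Ω₂ := by
      intro hzi
      have cont : Continuous fun t : ℝ => x + t • n := by fun_prop
      have hmem : (fun t : ℝ => x + t • n) ⁻¹' interior Ω₂ ∈ 𝓝 t₀ :=
        (isOpen_interior.preimage cont).mem_nhds hzi
      obtain ⟨ε, εpos, hball⟩ := Metric.mem_nhds_iff.mp hmem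
      have hmem' : t₀ + ε / 2 ∈ S := by
        refine ⟨by linarith [ht₀S.1], ?_⟩
        have hb : t₀ + ε / 2 ∈ ball t₀ ε := by
          rw [mem_ball, Real.dist_eq, add_sub_cancel_left, abs_of_pos (by linarith)]
          linarith
        exact interior_subset_closure (hball hb)
      have := le_csSup bdd hmem'
      linarith
    have hzfr : z ∈ frontier Ω₂ := ⟨hz2, hznotint⟩
    -- x satisfies the variational characterization of the projection of z
    have hxvar : ∀ w ∈ K, ⟪z - x, w - x⟫ ≤ 0 := by
      intro w hw
      have hzx : z - x = t₀ • n := by rw [hz]; abel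
      rw [hzx, real_inner_smul_left]
      have : ⟪n, w - x⟫ = f w - f x := by rw [hinner, map_sub]
      rw [this]
      exact mul_nonpos_of_nonneg_of_nonpos ht₀S.1 (sub_nonpos.2 (hfK w hw))
    have hpx : proj z = x := by
      have h := proj_var_dist (hproj_mem z) hxK (hproj_ineq z) hxvar (u₁ := z) (u₂ := z)
      rw [sub_self, norm_zero] at h
      have := le_antisymm h (norm_nonneg _)
      rwa [norm_eq_zero, sub_eq_zero] at this
    exact ⟨z, hzfr, hpx⟩
  calc μH[(N : ℝ) - 1] (frontier Ω₁)
      ≤ μH[(N : ℝ) - 1] (proj '' frontier Ω₂) := measure_mono surj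
    _ ≤ μH[(N : ℝ) - 1] (frontier Ω₂) := by
        have := lip.hausdorffMeasure_image_le hd (frontier Ω₂)
        simpa using this
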